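/- arXiv:math/0309297 — 10 statements merged into one kernel-verified Lean document; each statement's English description precedes it below -/
import Mathlib

section
/- Let B be a Boolean algebra and A a Boolean subalgebra of B. If A is σ-embedded in B, then A is sep-embedded in B; that is, if for every b ∈ B the set {a ∈ A : a ≤ b} has a countable cofinal subset, then for every b ∈ B and every uncountable set T ⊆ {a ∈ A : a ≤ b} there exists a ∈ A with a ≤ b such that {c ∈ T : c ≤ a} is uncountable. -/
open Set

/-- If a Boolean subalgebra `A` of `B` is σ-embedded in `B`, then it is sep-embedded. -/
theorem sigma_embedded_implies_sep_embedded {B : Type*} [BooleanAlgebra B] (A : Set B)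
    (hbot : ⊥ ∈ A) (htop : ⊤ ∈ A)
    (hsup : ∀ a ∈ A, ∀ b ∈ A, a ⊔ b ∈ A) (hinf : ∀ a ∈ A, ∀ b ∈ A, a ⊓ b ∈ A)
    (hcompl : ∀ a ∈ A, aᶜ ∈ A)
    (hσ : ∀ b : B, ∃ C ⊆ {a ∈ A | a ≤ b}, C.Countable ∧
      ∀ a ∈ A, a ≤ b → ∃ c ∈ C, a ≤ c) :
    ∀ b : B, ∀ T ⊆ {a ∈ A | a ≤ b}, ¬ T.Countable →
      ∃ a ∈ A, a ≤ b ∧ ¬ {c ∈ T | c ≤ a}.Countable := by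
  intro b T hT hTc
  obtain ⟨C, hC, hCc, hcof⟩ := hσ b
  by_contra h
  push_neg at h
  apply hTc
  have hsub : T ⊆ ⋃ c ∈ C, {t ∈ T | t ≤ c} := by
    intro t ht
    obtain ⟨ha, hb⟩ := hT ht
    obtain ⟨c, hcC, htc⟩ := hcof t ha hb
    exact mem_biUnion hcC ⟨ht, htc⟩
  exact Countable.mono hsub (Countable.biUnion hCc fun c hcC =>
    h c (hC hcC).1 (hC hcC).2)
end

section
/- Let B be a Boolean algebra and A a Boolean subalgebra of B of cardinality ℵ₁. If A is sep-embedded in B, then A is σ-embedded in B; that is, if for every b ∈ B and every uncountable T ⊆ {a ∈ A : a ≤ b} there exists a ∈ A with a ≤ b such that {c ∈ T : c ≤ a} is uncountable, then for every b ∈ B the set {a ∈ A : a ≤ b} has a countable cofinal subset. -/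
open Set Cardinal

/-- Auxiliary: transfinite construction of a sequence avoiding all earlier elements. -/
lemma build_seq_aux {B : Type*} [LE B] {I : Type*} [LinearOrder I] [WellFoundedLT I]
    (D : Set B) (e : I → B) (he : ∀ i, e i ∈ D)
    (hIio : ∀ i : I, (Set.Iio i).Countable)
    (H2 : ∀ S : Set B, S.Countable → ∃ x, x ∈ D ∧ ∀ s ∈ S, s ∈ D → ¬ x ≤ s) :
    ∃ c : I → B, ∀ i, c i ∈ D ∧ ∀ j, j < i → ¬ c i ≤ e j ∧ ¬ c i ≤ c j := by
  have count : ∀ (i : I) (g : ∀ j, j < i → B),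
      (e '' Set.Iio i ∪ Set.range (fun j : Set.Iio i => g j j.2)).Countable := by
    intro i g
    haveI := (hIio i).to_subtype
    exact ((hIio i).image e).union (Set.countable_range _)
  have wf : WellFounded ((· < ·) : I → I → Prop) := wellFounded_lt
  set F : ∀ i : I, (∀ j, j < i → B) → B := fun i g => (H2 _ (count i g)).choose with hF
  refine ⟨wf.fix F, fun i => ?_⟩
  refine wf.induction (C := fun i => wf.fix F i ∈ D ∧ ∀ j, j < i → ¬wf.fix F i ≤ e j ∧ ¬wf.fix F i ≤ wf.fix F j) i ?_
  intro x IH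
  rw [wf.fix_eq F x]
  have spec := (H2 _ (count x (fun y _ => wf.fix F y))).choose_spec
  refine ⟨spec.1, fun j hj => ?_⟩
  constructor
  · exact spec.2 _ (Set.mem_union_left _ (Set.mem_image_of_mem e hj)) (he j)
  · refine spec.2 _ (Set.mem_union_right _ ⟨⟨j, hj⟩, rfl⟩) ?_
    have := IH j hj
    exact this.1

/-- If a Boolean subalgebra `A` of `B` of cardinality `ℵ₁` is sep-embedded in `B`,
then it is σ-embedded in `B`. -/
theorem sep_embedded_implies_sigma_embedded {B : Type*} [BooleanAlgebra B] (A : Set B)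
    (hbot : ⊥ ∈ A) (htop : ⊤ ∈ A)
    (hsup : ∀ a ∈ A, ∀ b ∈ A, a ⊔ b ∈ A) (hinf : ∀ a ∈ A, ∀ b ∈ A, a ⊓ b ∈ A)
    (hcompl : ∀ a ∈ A, aᶜ ∈ A)
    (hcard : Cardinal.mk A = Cardinal.aleph 1)
    (hsep : ∀ b : B, ∀ T ⊆ {a ∈ A | a ≤ b}, ¬ T.Countable →
      ∃ a ∈ A, a ≤ b ∧ ¬ {c ∈ T | c ≤ a}.Countable) :
    ∀ b : B, ∃ C ⊆ {a ∈ A | a ≤ b}, C.Countable ∧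
      ∀ a ∈ A, a ≤ b → ∃ c ∈ C, a ≤ c := by
  intro b
  by_contra h
  push_neg at h
  set D : Set B := {a ∈ A | a ≤ b} with hDdef
  -- From the failure of σ-embeddedness at `b`: no countable subset of `D` is cofinal.
  have H2 : ∀ S : Set B, S.Countable → ∃ x, x ∈ D ∧ ∀ s ∈ S, s ∈ D → ¬ x ≤ s := by
    intro S hS
    obtain ⟨a, haA, hab, ha⟩ :=
      h (S ∩ D) Set.inter_subset_right (hS.mono Set.inter_subset_left)
    exact ⟨a, ⟨haA, hab⟩, fun s hs hsD => ha s ⟨hs, hsD⟩⟩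
  -- Index type of size ℵ₁ in which every initial segment is countable.
  set I := (Cardinal.aleph 1).ord.ToType with hI
  have hmkI : #I = Cardinal.aleph 1 := by
    rw [hI, Cardinal.mk_toType, Cardinal.card_ord]
  have hIio : ∀ i : I, (Set.Iio i).Countable := by
    intro i
    exact (countable_iff_lt_aleph_one _).2 (Cardinal.mk_Iio_ord_toType i)
  -- A surjection from `I` onto `D`.
  have hDsub : D ⊆ A := fun x hx => hx.1
  have hmkD : #D ≤ #I := by
    rw [hmkI, ← hcard]
    exact Cardinal.mk_le_mk_of_subset hDsub
  haveI : Nonempty D := ⟨⟨⊥, hbot, bot_le⟩⟩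
  obtain ⟨g⟩ : Nonempty (D ↪ I) := Cardinal.le_def _ _ |>.1 hmkD
  set f : I → D := Function.invFun g with hfdef
  have hf : Function.Surjective f := Function.invFun_surjective g.injective
  set e : I → B := fun i => (f i : B) with hedef
  have he : ∀ i, e i ∈ D := fun i => (f i).2
  -- Build the sequence.
  obtain ⟨c, hc⟩ := build_seq_aux D e he hIio H2
  have hcinj : Function.Injective c := by
    intro i j hij
    rcases lt_trichotomy i j with hlt | heq | hlt
    · exact absurd (le_of_eq hij.symm) ((hc j).2 i hlt).2
    · exact heq
    · exact absurd (le_of_eq hij) ((hc i).2 j hlt).2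
  set T : Set B := Set.range c with hTdef
  have hTsub : T ⊆ D := by
    rintro _ ⟨i, rfl⟩
    exact (hc i).1
  have hTuncount : ¬ T.Countable := by
    have hmkT : #T = Cardinal.aleph 1 := by
      rw [hTdef, Cardinal.mk_range_eq c hcinj, hmkI]
    rw [countable_iff_lt_aleph_one, hmkT]
    exact lt_irrefl _
  obtain ⟨a, haA, hab, huncount⟩ := hsep b T hTsub hTuncount
  obtain ⟨i₀, hi₀⟩ := hf ⟨a, haA, hab⟩
  have hei₀ : e i₀ = a := by rw [hedef]; exact congrArg Subtype.val hi₀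
  apply huncount
  have hsub : {x ∈ T | x ≤ a} ⊆ c '' Set.Iic i₀ := by
    rintro x ⟨⟨i, rfl⟩, hxa⟩
    refine ⟨i, ?_, rfl⟩
    by_contra hlt
    rw [Set.mem_Iic, not_le] at hlt
    exact ((hc i).2 i₀ hlt).1 (hei₀ ▸ hxa)
  have hIic : (Set.Iic i₀).Countable := by
    rw [← Set.Iio_union_right]
    exact (hIio i₀).union (Set.countable_singleton i₀)
  exact Set.Countable.mono hsub (hIic.image c)
end

section
/- Let A be a Boolean algebra, let f : A → [A]^{≤ℵ₀} be a WFN-function for A, and let B be a Boolean subalgebra of A that is closed under f (i.e., for every b ∈ B, f(b) ⊆ B). Then B is σ-embedded in A: for every a ∈ A, the set {b ∈ B : b ≤ a} has a countable cofinal subset and the set {b ∈ B : a ≤ b} has a countable coinitial subset. -/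
open Set

/-- If `f` is a WFN-function for the Boolean algebra `A` and `B` is a Boolean subalgebra
of `A` closed under `f`, then `B` is σ-embedded in `A`. -/
theorem subalgebra_closed_under_WFN_function_is_sigma_embedded
    {A : Type*} [BooleanAlgebra A] (f : A → Set A)
    (hfcnt : ∀ a : A, (f a).Countable)
    (hwfn : ∀ a b : A, a ≤ b → ∃ c ∈ f a ∩ f b, a ≤ c ∧ c ≤ b)
    (B : Set A)
    (hbot : ⊥ ∈ B) (htop : ⊤ ∈ B)
    (hsup : ∀ a ∈ B, ∀ b ∈ B, a ⊔ b ∈ B) (hinf : ∀ a ∈ B, ∀ b ∈ B, a ⊓ b ∈ B)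
    (hcompl : ∀ a ∈ B, aᶜ ∈ B)
    (hclosed : ∀ b ∈ B, f b ⊆ B) :
    ∀ a : A,
      (∃ C ⊆ {b ∈ B | b ≤ a}, C.Countable ∧ ∀ x ∈ B, x ≤ a → ∃ c ∈ C, x ≤ c) ∧
      (∃ C ⊆ {b ∈ B | a ≤ b}, C.Countable ∧ ∀ x ∈ B, a ≤ x → ∃ c ∈ C, c ≤ x) := by
  intro a
  constructor
  · refine ⟨f a ∩ {b ∈ B | b ≤ a}, inter_subset_right, ((hfcnt a).mono inter_subset_left), ?_⟩
    intro x hx hxa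
    obtain ⟨c, ⟨hcx, hca⟩, hxc, hcle⟩ := hwfn x a hxa
    exact ⟨c, ⟨hca, hclosed x hx hcx, hcle⟩, hxc⟩
  · refine ⟨f a ∩ {b ∈ B | a ≤ b}, inter_subset_right, ((hfcnt a).mono inter_subset_left), ?_⟩
    intro x hx hax
    obtain ⟨c, ⟨hca, hcx⟩, hac, hcle⟩ := hwfn a x hax
    exact ⟨c, ⟨hca, hclosed x hx hcx, hac⟩, hcle⟩
end

section
/- Let P and Q be partially ordered sets, and let e : P → Q and f : Q → P be order preserving maps with f ∘ e = id_P. Let S ⊆ P and T ⊆ Q be subsets with e[S] ⊆ T and f[T] ⊆ S. Suppose that for every q ∈ Q the set {t ∈ T : t ≤ q} has a countable cofinal subset and the set {t ∈ T : q ≤ t} has a countable coinitial subset. Then for every p ∈ P the set {s ∈ S : s ≤ p} has a countable cofinal subset and the set {s ∈ S : p ≤ s} has a countable coinitial subset. -/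
open Set

/-- σ-embeddability is inherited by order retracts. -/
theorem sigma_embedded_of_retract {P Q : Type*} [PartialOrder P] [PartialOrder Q]
    (e : P → Q) (f : Q → P) (he : Monotone e) (hf : Monotone f)
    (hfe : ∀ p : P, f (e p) = p)
    (S : Set P) (T : Set Q) (heST : ∀ s ∈ S, e s ∈ T) (hfTS : ∀ t ∈ T, f t ∈ S)
    (hT : ∀ q : Q,
      (∃ C ⊆ {t ∈ T | t ≤ q}, C.Countable ∧ ∀ t ∈ T, t ≤ q → ∃ c ∈ C, t ≤ c) ∧
      (∃ C ⊆ {t ∈ T | q ≤ t}, C.Countable ∧ ∀ t ∈ T, q ≤ t → ∃ c ∈ C, c ≤ t)) :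
    ∀ p : P,
      (∃ C ⊆ {s ∈ S | s ≤ p}, C.Countable ∧ ∀ s ∈ S, s ≤ p → ∃ c ∈ C, s ≤ c) ∧
      (∃ C ⊆ {s ∈ S | p ≤ s}, C.Countable ∧ ∀ s ∈ S, p ≤ s → ∃ c ∈ C, c ≤ s) := by
  intro p
  obtain ⟨⟨C₁, hC₁sub, hC₁cnt, hC₁cof⟩, ⟨C₂, hC₂sub, hC₂cnt, hC₂coi⟩⟩ := hT (e p)
  constructor
  · refine ⟨f '' C₁, ?_, hC₁cnt.image f, ?_⟩
    · rintro _ ⟨c, hc, rfl⟩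
      obtain ⟨hcT, hcle⟩ := hC₁sub hc
      exact ⟨hfTS c hcT, (hfe p) ▸ hf hcle⟩
    · intro s hs hsp
      obtain ⟨c, hc, hle⟩ := hC₁cof (e s) (heST s hs) (he hsp)
      exact ⟨f c, mem_image_of_mem f hc, (hfe s) ▸ hf hle⟩
  · refine ⟨f '' C₂, ?_, hC₂cnt.image f, ?_⟩
    · rintro _ ⟨c, hc, rfl⟩
      obtain ⟨hcT, hcle⟩ := hC₂sub hc
      exact ⟨hfTS c hcT, (hfe p) ▸ hf hcle⟩
    · intro s hs hsp
      obtain ⟨c, hc, hle⟩ := hC₂coi (e s) (heST s hs) (he hsp)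
      exact ⟨f c, mem_image_of_mem f hc, (hfe s) ▸ hf hle⟩
end

section
/- There exists a sequence (f_γ)_{γ<ω₂} of functions from ω₁ to ω₁ that is <*-increasing: for all γ < δ < ω₂, the set {α < ω₁ : f_γ(α) ≥ f_δ(α)} is countable. -/
/-!
Any `ℵ₁` functions `ω₁ → ω₁` have a common `<*`-upper bound: enumerate them as `(g ξ)_{ξ < ω₁}`
and put `f α = sup_{ξ ≤ α} (g ξ α + 1)`, a countable supremum of countable ordinals, so again
countable; then `g ξ α < f α` for all `α ≥ ξ`. Every `γ < ω₂` has at most `ℵ₁` predecessors, so a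
transfinite recursion along `ω₂` that bounds all earlier functions produces the sequence.
-/

open Set Cardinal

universe u v w

theorem exists_rel_increasing_of_forall_Iio_bound {ι β : Type*} [Preorder ι] [WellFoundedLT ι]
    (r : β → β → Prop) (h : ∀ γ : ι, ∀ g : Iio γ → β, ∃ b, ∀ i, r (g i) b) :
    ∃ f : ι → β, ∀ γ δ, γ < δ → r (f γ) (f δ) := by
  choose B hB using h
  let f : ι → β := wellFounded_lt.fix fun γ ih => B γ fun i => ih i i.2
  refine ⟨f, fun γ δ hγδ => ?_⟩
  have hf : f δ = B δ fun i => f i := wellFounded_lt.fix_eq _ δ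
  exact hf ▸ hB δ (fun i => f i) ⟨γ, hγδ⟩

theorem mk_Iio_lt_lift {κ : Cardinal.{u}} (ξ : {α : Ordinal.{u} // α < κ.ord}) :
    #(Iio ξ) < lift.{u + 1} κ := by
  have hinj : #(Iio ξ) ≤ #(Iio ξ.1) :=
    mk_le_of_injective (f := fun a => ⟨a.1.1, a.2⟩) fun a b h => by
      simpa [Subtype.ext_iff] using h
  rw [mk_Iio_ordinal] at hinj
  exact hinj.trans_lt (lift_lt.2 (lt_ord.1 ξ.2))

theorem mk_Iio_le_aleph_one (γ : {α : Ordinal.{u} // α < (aleph 2).ord}) : #(Iio γ) ≤ ℵ₁ := by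
  have h : lift.{u + 1} (aleph 2 : Cardinal.{u}) = Order.succ ℵ₁ := by
    rw [lift_aleph, Ordinal.lift_ofNat, ← one_add_one_eq_two, succ_aleph]
  exact Order.lt_succ_iff.1 (h ▸ mk_Iio_lt_lift γ)

abbrev OmegaOne : Type (u + 1) := {α : Ordinal.{u} // α < (aleph 1).ord}

namespace OmegaOne

theorem mk_eq : #OmegaOne.{u} = ℵ₁ :=
  (mk_Iio_ordinal _).trans (by simp)

theorem countable_Iio (ξ : OmegaOne.{u}) : (Iio ξ).Countable := by
  rw [← le_aleph0_iff_set_countable, ← lt_aleph_one_iff]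
  simpa using mk_Iio_lt_lift ξ

instance countable_Iic (α : OmegaOne.{u}) : Countable (Iic α) := by
  rw [← Iio_insert]
  exact ((countable_Iio α).insert α).to_subtype

theorem exists_dominating (g : OmegaOne.{v} → OmegaOne.{v} → OmegaOne.{w}) :
    ∃ f : OmegaOne.{v} → OmegaOne.{w}, ∀ ξ, {α | f α ≤ g ξ α}.Countable := by
  have hsup (α : OmegaOne.{v}) : ⨆ ξ : Iic α, Order.succ (g ξ α).1 < (aleph 1).ord :=
    (Ordinal.iSup_lt_omega_one (α := Iic α) fun ξ =>
      ((isSuccLimit_ord (aleph0_le_aleph 1)).succ_lt (g ξ α).2).trans_eq (ord_aleph 1)).trans_eq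
      (ord_aleph 1).symm
  refine ⟨fun α => ⟨_, hsup α⟩, fun ξ => (countable_Iio ξ).mono fun α hα => ?_⟩
  by_contra hξα
  have hle : Order.succ (g ξ α).1 ≤ ⨆ ξ : Iic α, Order.succ (g ξ α).1 :=
    Ordinal.le_iSup (fun ξ' : Iic α => Order.succ (g ξ' α).1) ⟨ξ, show ξ ≤ α from not_lt.1 hξα⟩
  exact (Order.lt_succ _).not_ge (hle.trans hα)

theorem exists_dominating_of_mk_le_aleph_one {ι : Type*} (hι : #ι ≤ ℵ₁)
    (g : ι → OmegaOne.{v} → OmegaOne.{w}) :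
    ∃ f : OmegaOne.{v} → OmegaOne.{w}, ∀ i, {α | f α ≤ g i α}.Countable := by
  rcases isEmpty_or_nonempty ι with hempty | hne
  · exact ⟨fun _ => ⟨0, ord_pos.2 (aleph_pos 1)⟩, isEmptyElim⟩
  obtain ⟨j⟩ : Nonempty (ι ↪ OmegaOne.{v}) := by
    rw [← lift_mk_le', mk_eq]
    simpa using hι
  obtain ⟨f, hf⟩ := exists_dominating fun ξ => g (Function.invFun j ξ)
  refine ⟨f, fun i => ?_⟩
  obtain ⟨ξ, rfl⟩ := Function.invFun_surjective j.injective i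
  exact hf ξ

end OmegaOne

/-- There is a `<*`-increasing sequence of functions `ω₁ → ω₁` of length `ω₂`. -/
theorem exists_increasing_omega2_sequence :
    ∃ f : {γ : Ordinal // γ < (Cardinal.aleph 2).ord} →
          ({α : Ordinal // α < (Cardinal.aleph 1).ord} →
           {α : Ordinal // α < (Cardinal.aleph 1).ord}),
      ∀ γ δ : {γ : Ordinal // γ < (Cardinal.aleph 2).ord}, γ < δ →
        {α | f δ α ≤ f γ α}.Countable :=
  exists_rel_increasing_of_forall_Iio_bound
    (fun (g f : OmegaOne → OmegaOne) => {α | f α ≤ g α}.Countable) fun γ =>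
    OmegaOne.exists_dominating_of_mk_le_aleph_one (mk_Iio_le_aleph_one γ)
end

section
/- The quotient of the Boolean algebra 𝒫(ω₁) by the ideal of countable subsets of ω₁ contains a strictly increasing chain of order type ω₂: there is a family (A_γ)_{γ<ω₂} of subsets of ω₁ such that for all γ < δ < ω₂, the set A_γ \ A_δ is countable and the set A_δ \ A_γ is uncountable. -/
open Set Cardinal Order Function

/-!
By recursion on `γ < ω₂` build `f_γ : ω₁ → ω₁` with `f_γ α < f_δ α` for all large enough `α`
whenever `γ < δ`: list the ordinals below `δ` as `(ξ_i)_{i < ω₁}` and choose `f_δ α` above the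
countably many values `f_{ξ_i} α` with `i ≤ α`. The regions `{(α, β) | β < f_γ α}` under the graphs,
transported along `ω₁ × ω₁ ≃ ω₁`, form the chain: one difference lies in a countable rectangle,
the other contains the graph of `f_γ` on a final segment of `ω₁`.
-/

universe u v w

section EventualDomination

variable {I : Type u} [LinearOrder I]

theorem exists_forall_lt_of_mk_lt_cof {s : Set I} (hs : #s < cof I) : ∃ b, ∀ x ∈ s, x < b :=
  not_isCofinal_iff.1 fun hcf => (cof_le hcf).not_gt hs

theorem cof_le_mk_Ici (i : I) : cof I ≤ #(Ici i) :=
  cof_le fun a => ⟨max a i, le_max_right a i, le_max_left a i⟩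

theorem exists_eventually_gt_of_lift_mk_le (hIic : ∀ i : I, #(Iic i) < cof I) {K : Type w}
    (hK : lift.{u} #K ≤ lift.{w} #I) (g : K → I → I) :
    ∃ h : I → I, ∀ k, ∃ i₀, ∀ α, i₀ ≤ α → g k α < h α := by
  cases isEmpty_or_nonempty K with
  | inl _ => exact ⟨id, isEmptyElim⟩
  | inr _ =>
    obtain ⟨e⟩ := lift_mk_le'.1 hK
    have hbound (α : I) : ∃ b, ∀ x ∈ range fun i : Iic α => g (invFun e i) α, x < b :=
      exists_forall_lt_of_mk_lt_cof (mk_range_le.trans_lt (hIic α))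
    choose h hh using hbound
    refine ⟨h, fun k => ?_⟩
    obtain ⟨i₀, rfl⟩ := invFun_surjective e.injective k
    exact ⟨i₀, fun α hα => hh α _ ⟨⟨i₀, hα⟩, rfl⟩⟩

theorem exists_eventually_strictMono_family {J : Type v} [LinearOrder J] [WellFoundedLT J]
    (hIic : ∀ i : I, #(Iic i) < cof I) (hJ : ∀ j : J, lift.{u} #(Iio j) ≤ lift.{v} #I) :
    ∃ f : J → I → I, ∀ j k, j < k → ∃ i₀, ∀ α, i₀ ≤ α → f j α < f k α := by
  choose next hnext using fun k => exists_eventually_gt_of_lift_mk_le hIic (hJ k)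
  let f : J → I → I := wellFounded_lt.fix fun k IH => next k fun j => IH j j.2
  have hf (k : J) : f k = next k fun j => f j := wellFounded_lt.fix_eq _ k
  refine ⟨f, fun j k hjk => ?_⟩
  rw [hf k]
  exact hnext k (fun j : Iio k => f j) ⟨j, hjk⟩

end EventualDomination

section ChainModSmall

variable {I : Type u} [LinearOrder I] {J : Type v} [LinearOrder J] [WellFoundedLT J]
  {κ : Cardinal.{u}}

theorem exists_chain_prod_mod_small (hκ : ℵ₀ ≤ κ) (hcof : κ ≤ cof I)
    (hIic : ∀ i : I, #(Iic i) < κ) (hJ : ∀ j : J, lift.{u} #(Iio j) ≤ lift.{v} κ) :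
    ∃ A : J → Set (I × I), ∀ j k, j < k → #↑(A j \ A k) < κ ∧ κ ≤ #↑(A k \ A j) := by
  obtain ⟨f, hf⟩ := exists_eventually_strictMono_family (fun i => (hIic i).trans_le hcof)
    fun j => (hJ j).trans (lift_le.2 (hcof.trans (cof_le_cardinalMk I)))
  refine ⟨fun j => {p | p.2 < f j p.1}, fun j k hjk => ?_⟩
  obtain ⟨i₀, hi₀⟩ := hf j k hjk
  constructor
  · obtain ⟨b, hb⟩ := exists_forall_lt_of_mk_lt_cof
      (mk_image_le.trans_lt ((hIic i₀).trans_le hcof) : #↑(f j '' Iic i₀) < cof I)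
    have hsub : {p : I × I | p.2 < f j p.1} \ {p | p.2 < f k p.1} ⊆ Iic i₀ ×ˢ Iic b := by
      rintro ⟨α, β⟩ ⟨hj, hk⟩
      have hα : α ≤ i₀ := (lt_of_not_ge fun h => hk (hj.trans (hi₀ α h))).le
      exact ⟨hα, (hj.trans (hb _ ⟨α, hα, rfl⟩)).le⟩
    calc #↑({p : I × I | p.2 < f j p.1} \ {p | p.2 < f k p.1})
        ≤ #↑(Iic i₀ ×ˢ Iic b) := mk_le_mk_of_subset hsub
      _ < κ := by rw [mk_setProd]; exact mul_lt_of_lt hκ (hIic i₀) (hIic b)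
  · have hsub : (fun α => (α, f j α)) '' Ici i₀ ⊆
        {p : I × I | p.2 < f k p.1} \ {p | p.2 < f j p.1} := by
      rintro _ ⟨α, hα, rfl⟩
      exact ⟨hi₀ α hα, lt_irrefl _⟩
    calc κ ≤ #(Ici i₀) := hcof.trans (cof_le_mk_Ici i₀)
      _ = #↑((fun α => (α, f j α)) '' Ici i₀) :=
        (mk_image_eq fun _ _ h => congrArg Prod.fst h).symm
      _ ≤ _ := mk_le_mk_of_subset hsub

theorem exists_chain_mod_small (hκ : ℵ₀ ≤ κ) (hcof : κ ≤ cof I)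
    (hIic : ∀ i : I, #(Iic i) < κ) (hJ : ∀ j : J, lift.{u} #(Iio j) ≤ lift.{v} κ) :
    ∃ A : J → Set I, ∀ j k, j < k → #↑(A j \ A k) < κ ∧ κ ≤ #↑(A k \ A j) := by
  obtain ⟨A, hA⟩ := exists_chain_prod_mod_small hκ hcof hIic hJ
  obtain ⟨e⟩ : Nonempty (I ≃ I × I) := Cardinal.eq.1 <| by
    rw [mk_prod, lift_id, mul_eq_self (hκ.trans (hcof.trans (cof_le_cardinalMk I)))]
  refine ⟨fun j => e ⁻¹' A j, fun j k hjk => ?_⟩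
  simpa only [← preimage_sdiff, mk_preimage_equiv] using hA j k hjk

end ChainModSmall

section OrdinalsBelow

theorem mk_Iio_subtype_le {o : Ordinal.{u}} (i : {α : Ordinal.{u} // α < o}) :
    #(Iio i) ≤ lift.{u + 1} i.1.card := by
  rw [← mk_Iio_ordinal]
  exact mk_le_of_injective (f := fun x : Iio i => (⟨x.1.1, x.2⟩ : Iio i.1))
    fun x y h => Subtype.ext (Subtype.ext (congrArg Subtype.val h :))

theorem mk_Iic_subtype_lt {c : Cardinal.{u}} (hc : ℵ₀ ≤ c) (i : {α : Ordinal.{u} // α < c.ord}) :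
    #(Iic i) < lift.{u + 1} c := by
  have hsucc : succ i.1 < c.ord := (isSuccLimit_ord hc).succ_lt i.2
  calc #(Iic i) ≤ #(Iio (⟨succ i.1, hsucc⟩ : {α : Ordinal.{u} // α < c.ord})) :=
        mk_le_mk_of_subset fun x (hx : x ≤ i) => (lt_succ_of_le hx : x.1 < succ i.1)
    _ ≤ lift.{u + 1} (succ i.1).card := mk_Iio_subtype_le _
    _ < lift.{u + 1} c := lift_lt.2 (lt_ord.1 hsucc)

theorem mk_Iio_subtype_le_of_le_ord_succ {o : Ordinal.{u}} {c : Cardinal.{u}}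
    (ho : o ≤ (succ c).ord) (i : {α : Ordinal.{u} // α < o}) : #(Iio i) ≤ lift.{u + 1} c :=
  (mk_Iio_subtype_le i).trans (lift_le.2 (lt_succ_iff.1 (lt_ord.1 (i.2.trans_le ho))))

theorem cof_subtype_lt_ord {c : Cardinal.{u}} (hc : c.IsRegular) :
    cof {α : Ordinal.{u} // α < c.ord} = lift.{u + 1} c :=
  (Ordinal.cof_Iio c.ord).trans (by rw [lift_ord, hc.lift.cof_ord])

end OrdinalsBelow

/-- `𝒫(ω₁)` modulo the ideal of countable sets contains a strictly increasing chain of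
order type `ω₂`. -/
theorem exists_chain_omega2_in_power_omega1_mod_countable :
    ∃ A : {γ : Ordinal // γ < (Cardinal.aleph 2).ord} →
          Set {α : Ordinal // α < (Cardinal.aleph 1).ord},
      ∀ γ δ : {γ : Ordinal // γ < (Cardinal.aleph 2).ord}, γ < δ →
        (A γ \ A δ).Countable ∧ ¬ (A δ \ A γ).Countable := by
  refine (exists_chain_mod_small (κ := ℵ₁) (aleph0_le_aleph 1) ?_ ?_ ?_).imp
    fun A hA γ δ h => ?_
  · simp [cof_subtype_lt_ord isRegular_aleph_one]
  · exact fun i => by simpa using mk_Iic_subtype_lt (aleph0_le_aleph 1) i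
  · intro j
    have hω₂ : (aleph 2).ord ≤ (succ ℵ₁).ord := by rw [← one_add_one_eq_two, ← succ_aleph]
    simpa using mk_Iio_subtype_le_of_le_ord_succ hω₂ j
  · simpa only [← le_aleph0_iff_set_countable, ← lt_aleph_one_iff, not_lt] using hA γ δ h
end

section
/- Let B be a Boolean subalgebra of 𝒫(ω₁) that contains every initial segment {β : β < α} for α < ω₁, and suppose that for every a ⊆ ω₁ the set {b ∈ B : b ⊆ a} has a countable cofinal subset. Then for every a ⊆ ω₁ there is a countable set C ⊆ {b ∈ B : b ⊆ a} such that for every b ∈ B with b \ a countable there exists c ∈ C with b \ c countable. (That is, the image of B is σ-embedded in the quotient of 𝒫(ω₁) by the ideal of countable sets, in the downward direction.) -/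
/-!
If `b \ a` is countable it is bounded in `ω₁`, say by `α`. Removing the initial segment below `α`
from `b` gives an element of `B` below `a`, hence below some `c ∈ C`, and then `b \ c` lies below
`α`, so it is countable.
-/

open Set Cardinal
open scoped Ordinal

theorem exists_mem_diff_countable_of_cofinal {X : Type*} {B : Set (Set X)}
    (hinf : ∀ a ∈ B, ∀ b ∈ B, a ∩ b ∈ B) (hcompl : ∀ a ∈ B, aᶜ ∈ B)
    (hcover : ∀ s : Set X, s.Countable → ∃ t ∈ B, t.Countable ∧ s ⊆ t)
    {a : Set X} {C : Set (Set X)} (hC : ∀ b ∈ B, b ⊆ a → ∃ c ∈ C, b ⊆ c)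
    {b : Set X} (hb : b ∈ B) (hba : (b \ a).Countable) : ∃ c ∈ C, (b \ c).Countable := by
  obtain ⟨t, htB, ht, hbat⟩ := hcover _ hba
  obtain ⟨c, hcC, hbc⟩ := hC (b ∩ tᶜ) (hinf b hb _ (hcompl t htB)) fun x hx => by
    by_contra hxa
    exact hx.2 (hbat ⟨hx.1, hxa⟩)
  refine ⟨c, hcC, ht.mono fun x hx => ?_⟩
  by_contra hxt
  exact hx.2 (hbc ⟨hx.1, hxt⟩)

local notation "Ω₁" => {α : Ordinal // α < Cardinal.ord (Cardinal.aleph 1)}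

theorem countable_setOf_lt_omega_one (α : Ω₁) : {β : Ω₁ | β < α}.Countable := by
  have hα : (Iio α.1).Countable := by
    rw [← le_aleph0_iff_set_countable, mk_Iio_ordinal, lift_le_aleph0, ← lt_aleph_one_iff,
      ← lt_ord]
    exact α.2
  exact hα.preimage Subtype.val_injective

theorem exists_setOf_lt_omega_one_superset {s : Set Ω₁} (hs : s.Countable) :
    ∃ α : Ω₁, s ⊆ {β | β < α} := by
  have := hs.to_subtype
  have hlt : ∀ x : s, Order.succ x.1.1 < ω_ 1 := fun x =>
    (isSuccLimit_omega 1).succ_lt (x.1.2.trans_eq (ord_aleph 1))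
  refine ⟨⟨⨆ x : s, Order.succ x.1.1, ?_⟩, fun x hx => ?_⟩
  · exact (Ordinal.iSup_lt_omega_one hlt).trans_eq (ord_aleph 1).symm
  · exact (Order.lt_succ _).trans_le (Ordinal.le_iSup (fun y : s => Order.succ y.1.1) ⟨x, hx⟩)

theorem quotient_sigma_embedded_of_sigma_embedded_general
    (B : Set (Set {α : Ordinal // α < (Cardinal.aleph 1).ord}))
    (hinf : ∀ a ∈ B, ∀ b ∈ B, a ∩ b ∈ B)
    (hcompl : ∀ a ∈ B, aᶜ ∈ B)
    (hinit : ∀ α : {α : Ordinal // α < (Cardinal.aleph 1).ord},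
      {β : {α : Ordinal // α < (Cardinal.aleph 1).ord} | β < α} ∈ B)
    (hσ : ∀ a : Set {α : Ordinal // α < (Cardinal.aleph 1).ord},
      ∃ C ⊆ {b ∈ B | b ⊆ a}, C.Countable ∧ ∀ b ∈ B, b ⊆ a → ∃ c ∈ C, b ⊆ c) :
    ∀ a : Set {α : Ordinal // α < (Cardinal.aleph 1).ord},
      ∃ C ⊆ {b ∈ B | b ⊆ a}, C.Countable ∧
        ∀ b ∈ B, (b \ a).Countable → ∃ c ∈ C, (b \ c).Countable := by
  have hcover : ∀ s : Set Ω₁, s.Countable → ∃ t ∈ B, t.Countable ∧ s ⊆ t := fun s hs => by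
    obtain ⟨α, hα⟩ := exists_setOf_lt_omega_one_superset hs
    exact ⟨_, hinit α, countable_setOf_lt_omega_one α, hα⟩
  intro a
  obtain ⟨C, hCa, hC, hcof⟩ := hσ a
  exact ⟨C, hCa, hC, fun b hb hba =>
    exists_mem_diff_countable_of_cofinal hinf hcompl hcover hcof hb hba⟩

/-- If a Boolean subalgebra `B` of `𝒫(ω₁)` contains all initial segments of `ω₁` and is
σ-embedded in `𝒫(ω₁)` (downward form), then its image in the quotient of `𝒫(ω₁)` by the
ideal of countable sets is σ-embedded in the quotient (downward form). -/
theorem quotient_sigma_embedded_of_sigma_embedded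
    (B : Set (Set {α : Ordinal // α < (Cardinal.aleph 1).ord}))
    (hbot : ∅ ∈ B) (htop : Set.univ ∈ B)
    (hsup : ∀ a ∈ B, ∀ b ∈ B, a ∪ b ∈ B) (hinf : ∀ a ∈ B, ∀ b ∈ B, a ∩ b ∈ B)
    (hcompl : ∀ a ∈ B, aᶜ ∈ B)
    (hinit : ∀ α : {α : Ordinal // α < (Cardinal.aleph 1).ord},
      {β : {α : Ordinal // α < (Cardinal.aleph 1).ord} | β < α} ∈ B)
    (hσ : ∀ a : Set {α : Ordinal // α < (Cardinal.aleph 1).ord},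
      ∃ C ⊆ {b ∈ B | b ⊆ a}, C.Countable ∧ ∀ b ∈ B, b ⊆ a → ∃ c ∈ C, b ⊆ c) :
    ∀ a : Set {α : Ordinal // α < (Cardinal.aleph 1).ord},
      ∃ C ⊆ {b ∈ B | b ⊆ a}, C.Countable ∧
        ∀ b ∈ B, (b \ a).Countable → ∃ c ∈ C, (b \ c).Countable :=
  quotient_sigma_embedded_of_sigma_embedded_general B hinf hcompl hinit hσ
end

section
/- Let A be an infinite complete Boolean algebra. Then the power set algebra 𝒫(ω) is an order retract of A: there exist an order embedding e : 𝒫(ω) → A (for all x, y ⊆ ω, x ⊆ y if and only if e(x) ≤ e(y)) and an order preserving map f : A → 𝒫(ω) with f ∘ e = id. -/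
open Set

/-- Splitting lemma: if the set of elements below `b` is infinite, we can split off a
nonzero piece `c` disjoint from `d`, with `c ⊔ d = b` and infinitely many elements below `d`. -/
lemma split_aux {A : Type*} [CompleteBooleanAlgebra A] (b : A) (hb : (Set.Iic b).Infinite) :
    ∃ c d : A, c ≠ ⊥ ∧ c ⊓ d = ⊥ ∧ c ⊔ d = b ∧ (Set.Iic d).Infinite := by
  obtain ⟨c, hcmem⟩ := (hb.diff (Set.toFinite ({⊥, b} : Set A))).nonempty
  obtain ⟨hcb, hc⟩ := hcmem
  simp only [Set.mem_insert_iff, Set.mem_singleton_iff, not_or] at hc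
  obtain ⟨hc0, hcneb⟩ := hc
  have hcb' : c ≤ b := hcb
  have hinj : Function.Injective (fun x : A => (x ⊓ c, x \ c)) := by
    intro x y h
    simp only [Prod.mk.injEq] at h
    calc x = x ⊓ c ⊔ x \ c := (sup_inf_sdiff x c).symm
      _ = y ⊓ c ⊔ y \ c := by rw [h.1, h.2]
      _ = y := sup_inf_sdiff y c
  have himg : ((fun x : A => (x ⊓ c, x \ c)) '' Set.Iic b).Infinite :=
    hb.image hinj.injOn
  have hsub : ((fun x : A => (x ⊓ c, x \ c)) '' Set.Iic b) ⊆ Set.Iic c ×ˢ Set.Iic (b \ c) := by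
    rintro p ⟨x, hx, rfl⟩
    exact ⟨inf_le_right, sdiff_le_sdiff_right hx⟩
  have hprod := Set.infinite_prod.mp (himg.mono hsub)
  rcases hprod with ⟨hic, -⟩ | ⟨hibc, -⟩
  · -- Iic c infinite: take (b \ c, c)
    refine ⟨b \ c, c, ?_, inf_sdiff_self_left, sdiff_sup_cancel hcb', hic⟩
    intro h
    exact hcneb (le_antisymm hcb' (sdiff_eq_bot_iff.mp h))
  · -- Iic (b \ c) infinite: take (c, b \ c)
    exact ⟨c, b \ c, hc0, inf_sdiff_self_right, sup_sdiff_cancel' le_rfl hcb', hibc⟩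

/-- `𝒫(ω)` is an order retract of every infinite complete Boolean algebra. -/
theorem power_omega_retract_of_infinite_complete_boolean_algebra
    {A : Type*} [CompleteBooleanAlgebra A] [Infinite A] :
    ∃ (e : Set ℕ → A) (f : A → Set ℕ),
      (∀ x y : Set ℕ, x ⊆ y ↔ e x ≤ e y) ∧ Monotone f ∧ ∀ x : Set ℕ, f (e x) = x := by
  classical
  choose C D hC hCD hsup hD using (split_aux (A := A))
  have htop : (Set.Iic (⊤ : A)).Infinite := by
    rw [Set.Iic_top]; exact Set.infinite_univ
  let B : ℕ → {b : A // (Set.Iic b).Infinite} :=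
    fun n => Nat.rec ⟨⊤, htop⟩ (fun _ p => ⟨D p.1 p.2, hD p.1 p.2⟩) n
  let a : ℕ → A := fun n => C (B n).1 (B n).2
  have hstep : ∀ n, a n ⊔ (B (n + 1)).1 = (B n).1 := fun n => hsup _ _
  have hdisj : ∀ n, a n ⊓ (B (n + 1)).1 = ⊥ := fun n => hCD _ _
  have hne : ∀ n, a n ≠ ⊥ := fun n => hC _ _
  have hanti : ∀ n, (B (n + 1)).1 ≤ (B n).1 := fun n => le_sup_right.trans (hstep n).le
  have hBanti : Antitone (fun n => (B n).1) := antitone_nat_of_succ_le hanti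
  have haB : ∀ n, a n ≤ (B n).1 := fun n => (le_sup_left).trans (hstep n).le
  have hpair : ∀ m n, m < n → a m ⊓ a n = ⊥ := by
    intro m n hmn
    have h1 : a n ≤ (B (m + 1)).1 := (haB n).trans (hBanti hmn)
    have := inf_le_inf_left (a m) h1
    exact le_bot_iff.mp ((this).trans (hdisj m).le)
  have hpair' : ∀ m n, m ≠ n → a m ⊓ a n = ⊥ := by
    intro m n h
    rcases h.lt_or_gt with h | h
    · exact hpair m n h
    · rw [inf_comm]; exact hpair n m h
  have key : ∀ (x : Set ℕ) (n : ℕ), a n ≤ ⨆ m ∈ x, a m ↔ n ∈ x := by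
    intro x n
    constructor
    · intro h
      by_contra hn
      apply hne n
      have h' : a n = a n ⊓ ⨆ m ∈ x, a m := (inf_eq_left.mpr h).symm
      rw [h', le_bot_iff.symm, inf_iSup_eq]
      refine iSup_le fun m => ?_
      rw [inf_iSup_eq]
      refine iSup_le fun hm => ?_
      exact (hpair' n m (fun hnm => hn (hnm ▸ hm))).le
    · intro hn
      exact le_iSup₂ (f := fun m (_ : m ∈ x) => a m) n hn
  refine ⟨fun x => ⨆ m ∈ x, a m, fun b => {n | a n ≤ b}, ?_, ?_, ?_⟩
  · intro x y
    constructor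
    · intro hxy
      exact iSup₂_le fun n hn => (key y n).mpr (hxy hn)
    · intro h n hn
      exact (key y n).mp (((key x n).mpr hn).trans h)
  · intro b b' hbb' n hn
    exact le_trans hn hbb'
  · intro x
    ext n
    exact key x n
end

section
/- Let A be a complete Boolean algebra that does not satisfy the countable chain condition, i.e., A contains an uncountable family of pairwise disjoint nonzero elements. Then the power set algebra 𝒫(ω₁) is an order retract of A: there exist an order embedding e : 𝒫(ω₁) → A (for all x, y ⊆ ω₁, x ⊆ y if and only if e(x) ≤ e(y)) and an order preserving map f : A → 𝒫(ω₁) with f ∘ e = id. -/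
/-!
An uncountable antichain `D` of `A` contains an injectively indexed family `(d i)_{i < ω₁}`.
In a frame, a pairwise disjoint family of nonzero elements is "independent":
`d i ≤ ⨆ j ∈ s, d j` exactly when `i ∈ s`. Hence `s ↦ ⨆ i ∈ s, d i` and `a ↦ {i | d i ≤ a}`
form an order retraction of `A` onto `𝒫(ω₁)`, and a monotone section of a monotone retraction
is automatically an order embedding.
-/

open Set Cardinal Function

universe u v

section Frame

variable {α ι : Type*} [Order.Frame α] {d : ι → α}

theorem le_biSup_iff_mem_of_pairwise_disjoint (hd : Pairwise (Disjoint on d))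
    (hne : ∀ i, d i ≠ ⊥) {i : ι} {s : Set ι} : d i ≤ ⨆ j ∈ s, d j ↔ i ∈ s := by
  refine ⟨fun hle => ?_, fun hi => le_biSup d hi⟩
  by_contra hi
  have hdisj : Disjoint (d i) (⨆ j ∈ s, d j) :=
    disjoint_iSup₂_iff.2 fun j hj => hd fun hij => hi (hij ▸ hj)
  exact hne i (disjoint_self.1 (hdisj.mono_right hle))

theorem exists_set_retract_of_pairwise_disjoint (hd : Pairwise (Disjoint on d))
    (hne : ∀ i, d i ≠ ⊥) :
    ∃ (e : Set ι → α) (f : α → Set ι),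
      (∀ x y, x ⊆ y ↔ e x ≤ e y) ∧ Monotone f ∧ ∀ x, f (e x) = x := by
  have hfe (x : Set ι) : {i | d i ≤ ⨆ j ∈ x, d j} = x :=
    Set.ext fun _ => le_biSup_iff_mem_of_pairwise_disjoint hd hne
  have hf : Monotone fun a : α => {i | d i ≤ a} := fun _ _ hab _ hi => le_trans hi hab
  refine ⟨fun x => ⨆ i ∈ x, d i, fun a => {i | d i ≤ a}, fun x y => ⟨?_, ?_⟩, hf, hfe⟩
  · exact biSup_mono
  · exact fun hle => hfe x ▸ hfe y ▸ hf hle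

end Frame

theorem nonempty_embedding_omega1_of_uncountable (X : Type u) [Uncountable X] :
    Nonempty ({o : Ordinal.{v} // o < (aleph.{v} 1).ord} ↪ X) := by
  apply lift_mk_le'.1
  have hω₁ : #{o : Ordinal.{v} // o < (aleph.{v} 1).ord} = lift.{v + 1} (aleph.{v} 1) :=
    (mk_Iio_ordinal _).trans (by rw [card_ord])
  rw [hω₁, lift_lift, lift_aleph, Ordinal.lift_one]
  exact aleph_one_le_iff.2 (aleph0_lt_lift.2 aleph0_lt_mk)

/-- If a complete Boolean algebra `A` fails the countable chain condition, then
`𝒫(ω₁)` is an order retract of `A`. -/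
theorem power_omega1_retract_of_non_ccc_complete_boolean_algebra
    {A : Type*} [CompleteBooleanAlgebra A] (D : Set A)
    (hD : ¬ D.Countable) (hD0 : ∀ a ∈ D, a ≠ ⊥)
    (hDdisj : ∀ a ∈ D, ∀ b ∈ D, a ≠ b → a ⊓ b = ⊥) :
    ∃ (e : Set {α : Ordinal // α < (Cardinal.aleph 1).ord} → A)
      (f : A → Set {α : Ordinal // α < (Cardinal.aleph 1).ord}),
      (∀ x y : Set {α : Ordinal // α < (Cardinal.aleph 1).ord}, x ⊆ y ↔ e x ≤ e y) ∧
      Monotone f ∧ ∀ x, f (e x) = x := by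
  have : Uncountable D := ⟨fun h => hD h.to_set⟩
  obtain ⟨g⟩ := nonempty_embedding_omega1_of_uncountable D
  have hdisj : Pairwise (Disjoint on fun i => (g i : A)) := fun i j hij =>
    disjoint_iff.2 <| hDdisj _ (g i).2 _ (g j).2 fun h => hij (g.injective (Subtype.ext h))
  exact exists_set_retract_of_pairwise_disjoint hdisj fun i => hD0 _ (g i).2
end

section
/- Let A be a Boolean algebra that contains a chain of order type ω₂, i.e., there is a strictly increasing map from the ordinals below ω₂ into A. Then the ordinal ω₂ + 1 (the ordinals ≤ ω₂ with their usual order) is an order retract of A: there exist order preserving maps e : ω₂ + 1 → A and f : A → ω₂ + 1 with f ∘ e = id. -/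
/-!
Let `c` be the chain. Send `γ < ω₂` to `c γ` and `ω₂` to `⊤`; conversely, send `a` to the supremum
of the `δ` with `c δ ≤ a`. Both maps are monotone, and since `c` is strictly monotone the supremum
recovers `γ` from `c γ`, while `⊤` is sent to `sup {δ | δ < ω₂} = ω₂` because `ω₂` is a limit.
The chain may live in a different universe of ordinals than `ω₂ + 1`, so it is first transported
along an order isomorphism between the two copies of `ω₂`.
-/

open Set Order

universe u v

theorem Ordinal.nonempty_orderIso_Iio_of_lift_eq {o : Ordinal.{u}} {o' : Ordinal.{v}}
    (h : Ordinal.lift.{v} o = Ordinal.lift.{u} o') : Nonempty (Iio o ≃o Iio o') := by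
  have : Ordinal.lift.{v + 1} (@Ordinal.type (Iio o) (· < ·) _) =
      Ordinal.lift.{u + 1} (@Ordinal.type (Iio o') (· < ·) _) := by
    rw [Ordinal.type_lt_Iio, Ordinal.type_lt_Iio]
    simpa only [Ordinal.lift_lift, Ordinal.lift_umax] using
      congrArg Ordinal.lift.{max (u + 1) (v + 1)} h
  obtain ⟨r⟩ := Ordinal.lift_type_eq.{u + 1, v + 1, 0}.1 this
  exact ⟨OrderIso.ofRelIsoLT r⟩

section Retract

variable {α P : Type*} [ConditionallyCompleteLinearOrderBot α] [Preorder P] {o : α}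

noncomputable def chainRank (c : Iio o → P) (a : P) : Iic o :=
  ⟨sSup {δ | ∃ h : δ < o, c ⟨δ, h⟩ ≤ a}, csSup_le' fun _ hδ ↦ hδ.1.le⟩

theorem monotone_chainRank (c : Iio o → P) : Monotone (chainRank c) :=
  fun _ _ hab ↦ csSup_le_csSup' ⟨o, fun _ hδ ↦ hδ.1.le⟩ fun _ ⟨hδ, hle⟩ ↦ ⟨hδ, hle.trans hab⟩

theorem chainRank_apply {c : Iio o → P} (hc : StrictMono c) (γ : Iio o) :
    chainRank c (c γ) = ⟨γ, γ.2.le⟩ := by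
  have hset : {δ | ∃ h : δ < o, c ⟨δ, h⟩ ≤ c γ} = Iic γ.1 := by
    ext δ
    exact ⟨fun ⟨_, hle⟩ ↦ hc.le_iff_le.1 hle,
      fun hle ↦ ⟨hle.trans_lt γ.2, hc.monotone (Subtype.mk_le_mk.2 hle)⟩⟩
  exact Subtype.ext (by simp only [chainRank, hset, csSup_Iic])

variable [OrderTop P]

open Classical in
noncomputable def topExtension (c : Iio o → P) (γ : Iic o) : P :=
  if h : γ.1 < o then c ⟨γ, h⟩ else ⊤

theorem monotone_topExtension {c : Iio o → P} (hc : Monotone c) : Monotone (topExtension c) := by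
  intro x y hxy
  unfold topExtension
  split_ifs with hx hy hy
  · exact hc hxy
  · exact le_top
  · exact absurd (lt_of_le_of_lt (Subtype.coe_le_coe.2 hxy) hy) hx
  · exact le_rfl

theorem chainRank_top (c : Iio o → P) (ho : IsSuccPrelimit o) : chainRank c ⊤ = ⟨o, le_rfl⟩ := by
  have hset : {δ | ∃ h : δ < o, c ⟨δ, h⟩ ≤ ⊤} = Iio o :=
    Set.ext fun _ ↦ ⟨fun ⟨hδ, _⟩ ↦ hδ, fun hδ ↦ ⟨hδ, le_top⟩⟩
  exact Subtype.ext (by simp only [chainRank, hset, ho.sSup_Iio])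

theorem chainRank_topExtension {c : Iio o → P} (hc : StrictMono c) (ho : IsSuccPrelimit o)
    (γ : Iic o) : chainRank c (topExtension c γ) = γ := by
  unfold topExtension
  split_ifs with hγ
  · exact chainRank_apply hc ⟨γ, hγ⟩
  · rw [chainRank_top c ho]
    exact Subtype.ext (le_antisymm (not_lt.1 hγ) γ.2)

theorem exists_orderRetract_Iic_of_strictMono {c : Iio o → P} (hc : StrictMono c)
    (ho : IsSuccPrelimit o) :
    ∃ (e : Iic o → P) (f : P → Iic o), Monotone e ∧ Monotone f ∧ ∀ x, f (e x) = x :=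
  ⟨topExtension c, chainRank c, monotone_topExtension hc.monotone, monotone_chainRank c,
    chainRank_topExtension hc ho⟩

end Retract

/-- If a Boolean algebra `A` contains a chain of order type `ω₂`, then the linear
order `ω₂ + 1` (the ordinals `≤ ω₂`) is an order retract of `A`. -/
theorem omega2_succ_retract_of_chain
    {A : Type*} [BooleanAlgebra A]
    (c : {γ : Ordinal // γ < (Cardinal.aleph 2).ord} → A) (hc : StrictMono c) :
    ∃ (e : {γ : Ordinal // γ ≤ (Cardinal.aleph 2).ord} → A)
      (f : A → {γ : Ordinal // γ ≤ (Cardinal.aleph 2).ord}),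
      Monotone e ∧ Monotone f ∧ ∀ x, f (e x) = x := by
  obtain ⟨φ⟩ := Ordinal.nonempty_orderIso_Iio_of_lift_eq (by simp :
    Ordinal.lift.{_} (Cardinal.aleph 2).ord = Ordinal.lift.{_} (Cardinal.aleph 2).ord)
  have hlim : IsSuccLimit (Cardinal.aleph 2).ord :=
    Cardinal.isSuccLimit_ord (Cardinal.aleph0_le_aleph 2)
  exact exists_orderRetract_Iic_of_strictMono (c := c ∘ φ) (hc.comp φ.strictMono)
    hlim.isSuccPrelimit
end
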